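/- arXiv:1304.2539 — 2 statements merged into one kernel-verified Lean document; each statement's English description precedes it below -/
import Mathlib

section
/- Let 0 ≤ a < b, let α ∈ [0,1], m ∈ (0,1], s ∈ (0,1], let q > 1 with conjugate exponent p = q/(q−1), and let f : ℝ → ℝ be differentiable on an open interval containing [a, b/m] with f' integrable on [a, b]. If |f'|^q is s-(α,m)-convex, i.e. for all x, y ∈ [a, b] and t ∈ [0,1], |f'(t·x + (1−t)·y)|^q ≤ t^{αs} |f'(x)|^q + m (1 − t^{αs}) |f'(y/m)|^q, then |(f(a)+f(b))/2 − (1/(b−a)) ∫_a^b f(x) dx| ≤ ((b−a) / 3^{1/p}) · [ u₁ |f'(a)|^q + u₂ |f'(b/m)|^q ]^{1/q}, where u₁ = ((αs)² + 3αs + 4) / (2 (αs+1)(αs+2)(αs+3)) and u₂ = m (1/3 − u₁). -/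
/-! The left-hand side equals `(b - a) ∫₀¹ (1/2 - t) F t dt` with `F t = f'(t a + (1 - t) b)`.
Bound `|1/2 - t|` by the weight `w t = t² - t + 1/2`, whose mass on `[0, 1]` is `1/3`; Hölder's
inequality for the measure `w dt` then bounds `∫₀¹ w |F|` by `(1/3)^(1/p) (∫₀¹ w |F|^q)^(1/q)`.
Convexity at `x = a`, `y = b` bounds `|F t|^q` by `t^(αs) |f' a|^q + m (1 - t^(αs)) |f' (b/m)|^q`,
and the moments `∫₀¹ w = 1/3`, `∫₀¹ w t^(αs) = u₁` evaluate the result. -/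

open MeasureTheory Set intervalIntegral

theorem sub_mul_integral_comp_segment (g : ℝ → ℝ) (a b : ℝ) :
    (b - a) * ∫ t in (0:ℝ)..1, g (t * a + (1 - t) * b) = ∫ x in a..b, g x := by
  have h := smul_integral_comp_mul_add (a := 0) (b := 1) g (a - b) b
  simp only [mul_zero, zero_add, mul_one, sub_add_cancel, smul_eq_mul] at h
  have e : (fun t => g (t * a + (1 - t) * b)) = fun t => g ((a - b) * t + b) := by
    ext t; ring_nf
  rw [e, integral_symm b a, ← h]
  ring

theorem IntervalIntegrable.comp_segment {g : ℝ → ℝ} {a b : ℝ}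
    (hg : IntervalIntegrable g volume a b) :
    IntervalIntegrable (fun t => g (t * a + (1 - t) * b)) volume 0 1 := by
  rcases eq_or_ne a b with rfl | hab
  · simp_rw [← add_mul, add_sub_cancel, one_mul]
    exact intervalIntegrable_const
  have h := (hg.comp_add_right b).comp_mul_left (c := a - b)
  rw [sub_self, zero_div, div_self (sub_ne_zero.2 hab)] at h
  convert h.symm using 2 with t
  ring_nf

theorem trapezoid_sub_average_eq {f f' : ℝ → ℝ} {a b : ℝ} (hab : a ≠ b)
    (hf : ∀ x ∈ uIcc a b, HasDerivAt f (f' x) x) (hf' : IntervalIntegrable f' volume a b) :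
    (f a + f b) / 2 - (1 / (b - a)) * ∫ x in a..b, f x =
      (b - a) * ∫ t in (0:ℝ)..1, (1 / 2 - t) * f' (t * a + (1 - t) * b) := by
  have hba : b - a ≠ 0 := sub_ne_zero.2 hab.symm
  have parts := integral_mul_deriv_eq_deriv_mul
    (fun x _ => (hasDerivAt_id x).sub_const ((a + b) / 2)) hf intervalIntegrable_const hf'
  have subst := sub_mul_integral_comp_segment (fun x => (x - (a + b) / 2) * f' x) a b
  have e : (fun t => (t * a + (1 - t) * b - (a + b) / 2) * f' (t * a + (1 - t) * b)) =
      fun t => (b - a) * ((1 / 2 - t) * f' (t * a + (1 - t) * b)) := by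
    ext t; ring
  simp only [id, one_mul] at parts
  rw [e, intervalIntegral.integral_const_mul, parts] at subst
  generalize (∫ t in (0:ℝ)..1, (1 / 2 - t) * f' (t * a + (1 - t) * b)) = I at subst ⊢
  have hF : ∫ x in a..b, f x = (b - a) * ((f a + f b) / 2 - (b - a) * I) := by
    linear_combination subst
  rw [hF]
  field_simp
  ring

section WeightedHolder

variable {α : Type*} [MeasurableSpace α] {μ : Measure α}

theorem memLp_ofReal_of_integrable_rpow {f : α → ℝ} {p : ℝ} (hp : 0 < p) (hf : 0 ≤ᵐ[μ] f)
    (hf_meas : AEStronglyMeasurable f μ) (hf_int : Integrable (fun x => f x ^ p) μ) :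
    MemLp f (ENNReal.ofReal p) μ := by
  refine (integrable_norm_rpow_iff hf_meas (by simpa using hp) ENNReal.ofReal_ne_top).1 ?_
  refine hf_int.congr ?_
  filter_upwards [hf] with x hx
  rw [ENNReal.toReal_ofReal hp.le, Real.norm_of_nonneg hx]

theorem integral_mul_le_weight_mul_Lp {p q : ℝ} (hpq : p.HolderConjugate q) {w g : α → ℝ}
    (hw : 0 ≤ᵐ[μ] w) (hg : 0 ≤ᵐ[μ] g) (hw_int : Integrable w μ)
    (hg_meas : AEStronglyMeasurable g μ) (hwg_int : Integrable (fun x => w x * g x ^ q) μ) :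
    ∫ x, w x * g x ∂μ ≤ (∫ x, w x ∂μ) ^ (1 / p) * (∫ x, w x * g x ^ q ∂μ) ^ (1 / q) := by
  have hp := hpq.pos
  have hq := hpq.symm.pos
  have hsum : 1 / p + 1 / q = 1 := by simpa only [one_div] using hpq.inv_add_inv_eq_one
  have hw_pow (r : ℝ) (hr : 0 < r) : (fun x => (w x ^ (1 / r)) ^ r) =ᵐ[μ] w := by
    filter_upwards [hw] with x hx
    rw [← Real.rpow_mul hx, one_div_mul_cancel hr.ne', Real.rpow_one]
  have hw_meas (r : ℝ) : AEStronglyMeasurable (fun x => w x ^ r) μ :=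
    (hw_int.aemeasurable.pow_const r).aestronglyMeasurable
  have hf0 : 0 ≤ᵐ[μ] fun x => w x ^ (1 / p) := by
    filter_upwards [hw] with x hx using Real.rpow_nonneg hx _
  have hg0 : 0 ≤ᵐ[μ] fun x => w x ^ (1 / q) * g x := by
    filter_upwards [hw, hg] with x hx hgx using mul_nonneg (Real.rpow_nonneg hx _) hgx
  have hgq : (fun x => (w x ^ (1 / q) * g x) ^ q) =ᵐ[μ] fun x => w x * g x ^ q := by
    filter_upwards [hw, hg, hw_pow q hq] with x hx hgx hwx
    rw [Real.mul_rpow (Real.rpow_nonneg hx _) hgx, hwx]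
  have hwg : (fun x => w x ^ (1 / p) * (w x ^ (1 / q) * g x)) =ᵐ[μ] fun x => w x * g x := by
    filter_upwards [hw] with x hx
    rw [← mul_assoc, ← Real.rpow_add' hx (by rw [hsum]; exact one_ne_zero), hsum, Real.rpow_one]
  -- Hölder for the factorisation `w g = w^(1/p) · (w^(1/q) g)`.
  have H := integral_mul_le_Lp_mul_Lq_of_nonneg hpq hf0 hg0
    (memLp_ofReal_of_integrable_rpow hp hf0 (hw_meas _) (hw_int.congr (hw_pow p hp).symm))
    (memLp_ofReal_of_integrable_rpow hq hg0 ((hw_meas _).mul hg_meas) (hwg_int.congr hgq.symm))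
  rwa [integral_congr_ae hwg, integral_congr_ae (hw_pow p hp), integral_congr_ae hgq] at H

end WeightedHolder

theorem abs_half_sub_le (t : ℝ) : |1 / 2 - t| ≤ t ^ 2 - t + 1 / 2 :=
  abs_le.2 ⟨by nlinarith [sq_nonneg (t - 1)], by nlinarith [sq_nonneg t]⟩

theorem integral_sq_sub_add_half : ∫ t in (0:ℝ)..1, (t ^ 2 - t + 1 / 2) = 1 / 3 := by
  norm_num

theorem integral_sq_sub_add_half_mul_rpow {σ : ℝ} (hσ : -1 < σ) :
    ∫ t in (0:ℝ)..1, (t ^ 2 - t + 1 / 2) * t ^ σ =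
      (σ ^ 2 + 3 * σ + 4) / (2 * (σ + 1) * (σ + 2) * (σ + 3)) := by
  have hpow : EqOn (fun t : ℝ => (t ^ 2 - t + 1 / 2) * t ^ σ)
      (fun t => t ^ (σ + 2) - t ^ (σ + 1) + 1 / 2 * t ^ σ) (uIcc 0 1) := by
    intro t ht
    rw [uIcc_of_le zero_le_one] at ht
    simp only [Real.rpow_add' ht.1 (by linarith : σ + 2 ≠ 0),
      Real.rpow_add' ht.1 (by linarith : σ + 1 ≠ 0), Real.rpow_one, Real.rpow_two]
    ring
  have hint2 := intervalIntegrable_rpow' (a := 0) (b := 1) (by linarith : -1 < σ + 2)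
  have hint1 := intervalIntegrable_rpow' (a := 0) (b := 1) (by linarith : -1 < σ + 1)
  rw [integral_congr hpow, integral_add (hint2.sub hint1)
      ((intervalIntegrable_rpow' hσ).const_mul _), integral_sub hint2 hint1,
    intervalIntegral.integral_const_mul, integral_rpow (Or.inl (by linarith)),
    integral_rpow (Or.inl (by linarith)), integral_rpow (Or.inl hσ)]
  have h1 : σ + 1 ≠ 0 := by linarith
  have h2 : σ + 2 ≠ 0 := by linarith
  have h3 : σ + 3 ≠ 0 := by linarith
  rw [show σ + 2 + 1 = σ + 3 by ring, show σ + 1 + 1 = σ + 2 by ring]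
  simp only [Real.one_rpow, Real.zero_rpow h1, Real.zero_rpow h2, Real.zero_rpow h3]
  field_simp
  ring

theorem abs_integral_half_sub_mul_le {p q : ℝ} (hpq : p.HolderConjugate q) {F h : ℝ → ℝ}
    (hF : IntervalIntegrable F volume 0 1) (hh : IntervalIntegrable h volume 0 1)
    (hFh : ∀ t ∈ Icc (0:ℝ) 1, |F t| ^ q ≤ h t) :
    |∫ t in (0:ℝ)..1, (1 / 2 - t) * F t| ≤
      (∫ t in (0:ℝ)..1, (t ^ 2 - t + 1 / 2) * h t) ^ (1 / q) / 3 ^ (1 / p) := by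
  have hw_cont : Continuous fun t : ℝ => t ^ 2 - t + 1 / 2 := by fun_prop
  have hw_nonneg (t : ℝ) : 0 ≤ t ^ 2 - t + 1 / 2 := by nlinarith [sq_nonneg (t - 1 / 2)]
  have hwh : IntervalIntegrable (fun t => (t ^ 2 - t + 1 / 2) * h t) volume 0 1 :=
    hh.continuousOn_mul hw_cont.continuousOn
  have hwFq : IntervalIntegrable (fun t => (t ^ 2 - t + 1 / 2) * |F t| ^ q) volume 0 1 := by
    rw [intervalIntegrable_iff_integrableOn_Ioc_of_le zero_le_one] at hwh ⊢
    refine hwh.mono' ?_ ?_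
    · exact hw_cont.aestronglyMeasurable.mul
        (hF.1.aestronglyMeasurable.norm.aemeasurable.pow_const q).aestronglyMeasurable
    · filter_upwards [ae_restrict_mem measurableSet_Ioc] with t ht
      rw [Real.norm_of_nonneg (mul_nonneg (hw_nonneg t) (by positivity))]
      exact mul_le_mul_of_nonneg_left (hFh t (Ioc_subset_Icc_self ht)) (hw_nonneg t)
  have hHolder := integral_mul_le_weight_mul_Lp (μ := volume.restrict (Ioc 0 1)) hpq
    (ae_of_all _ hw_nonneg) (ae_of_all _ fun t => abs_nonneg (F t))
    (hw_cont.integrableOn_Icc.mono_set Ioc_subset_Icc_self) hF.abs.1.aestronglyMeasurable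
    ((intervalIntegrable_iff_integrableOn_Ioc_of_le zero_le_one).1 hwFq)
  rw [← integral_of_le zero_le_one, ← integral_of_le zero_le_one,
    ← integral_of_le zero_le_one, integral_sq_sub_add_half] at hHolder
  calc |∫ t in (0:ℝ)..1, (1 / 2 - t) * F t|
      ≤ ∫ t in (0:ℝ)..1, |(1 / 2 - t) * F t| := abs_integral_le_integral_abs zero_le_one
    _ ≤ ∫ t in (0:ℝ)..1, (t ^ 2 - t + 1 / 2) * |F t| := by
        refine integral_mono_on zero_le_one (hF.continuousOn_mul (by fun_prop)).abs
          (hF.abs.continuousOn_mul hw_cont.continuousOn) fun t _ => ?_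
        rw [abs_mul]
        exact mul_le_mul_of_nonneg_right (abs_half_sub_le t) (abs_nonneg _)
    _ ≤ (1 / 3) ^ (1 / p) * (∫ t in (0:ℝ)..1, (t ^ 2 - t + 1 / 2) * |F t| ^ q) ^ (1 / q) :=
        hHolder
    _ ≤ (1 / 3) ^ (1 / p) * (∫ t in (0:ℝ)..1, (t ^ 2 - t + 1 / 2) * h t) ^ (1 / q) := by
        refine mul_le_mul_of_nonneg_left
          (Real.rpow_le_rpow ?_ ?_ (one_div_nonneg.2 hpq.symm.nonneg)) (by positivity)
        · exact integral_nonneg zero_le_one fun t _ => mul_nonneg (hw_nonneg t) (by positivity)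
        · exact integral_mono_on zero_le_one hwFq hwh fun t ht =>
            mul_le_mul_of_nonneg_left (hFh t ht) (hw_nonneg t)
    _ = _ := by rw [Real.div_rpow zero_le_one zero_le_three, Real.one_rpow]; ring

theorem integral_sq_sub_add_half_mul_convex_bound {σ : ℝ} (hσ : -1 < σ) (m A B : ℝ) :
    ∫ t in (0:ℝ)..1, (t ^ 2 - t + 1 / 2) * (t ^ σ * A + m * (1 - t ^ σ) * B) =
      (σ ^ 2 + 3 * σ + 4) / (2 * (σ + 1) * (σ + 2) * (σ + 3)) * A +
        m * (1 / 3 - (σ ^ 2 + 3 * σ + 4) / (2 * (σ + 1) * (σ + 2) * (σ + 3))) * B := by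
  have hw : IntervalIntegrable (fun t : ℝ => t ^ 2 - t + 1 / 2) volume 0 1 :=
    (by fun_prop : Continuous fun t : ℝ => t ^ 2 - t + 1 / 2).intervalIntegrable 0 1
  have hwσ : IntervalIntegrable (fun t : ℝ => (t ^ 2 - t + 1 / 2) * t ^ σ) volume 0 1 :=
    (intervalIntegrable_rpow' hσ).continuousOn_mul (by fun_prop)
  have hsplit (t : ℝ) : (t ^ 2 - t + 1 / 2) * (t ^ σ * A + m * (1 - t ^ σ) * B) =
      A * ((t ^ 2 - t + 1 / 2) * t ^ σ) + m * B * (t ^ 2 - t + 1 / 2) -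
        m * B * ((t ^ 2 - t + 1 / 2) * t ^ σ) := by ring
  simp only [hsplit]
  rw [integral_sub ((hwσ.const_mul A).add (hw.const_mul (m * B))) (hwσ.const_mul (m * B)),
    integral_add (hwσ.const_mul A) (hw.const_mul (m * B)), intervalIntegral.integral_const_mul,
    intervalIntegral.integral_const_mul, intervalIntegral.integral_const_mul,
    integral_sq_sub_add_half, integral_sq_sub_add_half_mul_rpow hσ]
  ring

/-- Theorem 6: power-mean-type double-integral Hermite–Hadamard estimate for `|f'|^q`
being `s`-`(α,m)`-convex (first sense), `q > 1`, `p = q/(q-1)`. -/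
theorem hh_s_alpha_m_convex_power_mean_double (f f' : ℝ → ℝ) (a b α m s p q c d : ℝ)
    (ha : 0 ≤ a) (hab : a < b)
    (hα : α ∈ Set.Icc (0:ℝ) 1) (hm : m ∈ Set.Ioc (0:ℝ) 1) (hs : s ∈ Set.Ioc (0:ℝ) 1)
    (hq : 1 < q) (hp : p = q / (q - 1))
    (hc : c < a) (hd : b / m < d)
    (hdiff : ∀ x ∈ Set.Ioo c d, HasDerivAt f (f' x) x)
    (hint : IntervalIntegrable f' volume a b)
    (hconv : ∀ x ∈ Set.Icc a b, ∀ y ∈ Set.Icc a b, ∀ t ∈ Set.Icc (0:ℝ) 1,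
      |f' (t * x + (1 - t) * y)| ^ q ≤
        t ^ (α * s) * |f' x| ^ q + m * (1 - t ^ (α * s)) * |f' (y / m)| ^ q) :
    |(f a + f b) / 2 - (1 / (b - a)) * ∫ x in a..b, f x| ≤
      ((b - a) / 3 ^ (1 / p)) *
        (((α * s) ^ 2 + 3 * (α * s) + 4) /
            (2 * (α * s + 1) * (α * s + 2) * (α * s + 3)) * |f' a| ^ q
          + m * (1 / 3 -
              ((α * s) ^ 2 + 3 * (α * s) + 4) /
                (2 * (α * s + 1) * (α * s + 2) * (α * s + 3)))
            * |f' (b / m)| ^ q) ^ (1 / q) := by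
  have hσ : 0 ≤ α * s := mul_nonneg hα.1 hs.1.le
  have hbm : b ≤ b / m := le_div_self (ha.trans hab.le) hm.1 hm.2
  have hderiv (x : ℝ) (hx : x ∈ uIcc a b) : HasDerivAt f (f' x) x := by
    rw [uIcc_of_le hab.le] at hx
    exact hdiff x ⟨hc.trans_le hx.1, (hx.2.trans hbm).trans_lt hd⟩
  have hpq : p.HolderConjugate q := ((Real.holderConjugate_iff_eq_conjExponent hq).2 hp).symm
  have hbound : IntervalIntegrable (fun t : ℝ => t ^ (α * s) * |f' a| ^ q +
      m * (1 - t ^ (α * s)) * |f' (b / m)| ^ q) volume 0 1 :=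
    (by fun_prop (disch := exact hσ) : Continuous _).intervalIntegrable 0 1
  have hI := abs_integral_half_sub_mul_le hpq hint.comp_segment hbound
    (hconv a (left_mem_Icc.2 hab.le) b (right_mem_Icc.2 hab.le))
  rw [integral_sq_sub_add_half_mul_convex_bound (by linarith)] at hI
  rw [trapezoid_sub_average_eq hab.ne hderiv hint, abs_mul, abs_of_pos (sub_pos.2 hab),
    div_mul_eq_mul_div, mul_div_assoc]
  exact mul_le_mul_of_nonneg_left hI (sub_pos.2 hab).le
end

section
/- Let 0 ≤ a < b, let s ∈ (0,1], let q > 1 with conjugate exponent p = q/(q−1), and let f : ℝ → ℝ be differentiable on an open interval containing [a, b] with f' integrable on [a, b]. Suppose |f'|^q is s-convex in the second sense on [a, b], i.e. for all x, y ∈ [a, b] and t ∈ [0,1], |f'(t·x + (1−t)·y)|^q ≤ t^s |f'(x)|^q + (1−t)^s |f'(y)|^q. Let D = {a = x₀ < x₁ < … < x_n = b} be any partition of [a, b], let S(f,D) = Σ_{k=0}^{n−1} ((f(x_k)+f(x_{k+1}))/2)(x_{k+1} − x_k) be the trapezoidal sum, and R(f,D) = ∫_a^b f(x) dx − S(f,D)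 the error. Then |R(f,D)| ≤ (2/3)^{1/p} · ( (s² + 3s + 4) / ((s+1)(s+2)(s+3)) )^{1/q} · Σ_{k=0}^{n−1} ((x_{k+1} − x_k)²/2) ( |f'(x_k)| + |f'(x_{k+1})| ). -/
/-! On a cell `[α, β]` with midpoint `m`, integration by parts writes the trapezoidal error as
`-∫ (y - m) f'(y) dy`. Hölder's inequality for the weight `|y - m|` bounds it by
`(∫ |y - m|)^(1/p) (∫ |y - m| |f'|^q)^(1/q)`. Bounding `t^s` by its tangent `s t + 1 - s` turns
`s`-convexity into an affine majorant of `|f'|^q`, and the `|y - m|`-weighted integral of an affine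
function is `(β - α)²/4` times its value at `m`. This gives the factors `(1/2)^(1/p)` and
`((2 - s)/4)^(1/q)`, and `(2 - s)/4 ≤ (s² + 3s + 4)/((s + 1)(s + 2)(s + 3))` for `s ≥ 0`. Summing
over the cells gives the estimate. -/

open MeasureTheory intervalIntegral Set

theorem rpow_le_mul_add_one_sub {t s : ℝ} (ht : 0 ≤ t) (hs0 : 0 ≤ s) (hs1 : s ≤ 1) :
    t ^ s ≤ s * t + (1 - s) := by
  have := rpow_one_add_le_one_add_mul_self (by linarith : -1 ≤ t - 1) hs0 hs1
  rw [add_sub_cancel] at this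
  linarith

theorem le_affine_of_sConvex_endpoints {g : ℝ → ℝ} {s α β y : ℝ} (hs0 : 0 ≤ s) (hs1 : s ≤ 1)
    (hαβ : α < β) (hgα : 0 ≤ g α) (hgβ : 0 ≤ g β)
    (hconv : ∀ t ∈ Icc (0:ℝ) 1, g (t * α + (1 - t) * β) ≤ t ^ s * g α + (1 - t) ^ s * g β)
    (hy : y ∈ Icc α β) :
    g y ≤ (1 - s / 2) * (g α + g β) + s * (g β - g α) / (β - α) * (y - (α + β) / 2) := by
  have hβα : 0 < β - α := sub_pos.2 hαβ
  set t := (β - y) / (β - α) with ht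
  have ht0 : 0 ≤ t := div_nonneg (by linarith [hy.2]) hβα.le
  have ht1 : t ≤ 1 := (div_le_one hβα).2 (by linarith [hy.1])
  have hyt : t * α + (1 - t) * β = y := by rw [ht]; field_simp; ring
  calc g y ≤ t ^ s * g α + (1 - t) ^ s * g β := hyt ▸ hconv t ⟨ht0, ht1⟩
    _ ≤ (s * t + (1 - s)) * g α + (s * (1 - t) + (1 - s)) * g β := by
      gcongr
      · exact rpow_le_mul_add_one_sub ht0 hs0 hs1
      · exact rpow_le_mul_add_one_sub (by linarith) hs0 hs1
    _ = _ := by rw [ht]; field_simp; ring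

theorem integral_mul_le_weighted_Lp_mul_Lq_of_nonneg {α : Type*} [MeasurableSpace α]
    {μ : Measure α} {p q : ℝ} (hpq : p.HolderConjugate q) {w g : α → ℝ}
    (hw : 0 ≤ᵐ[μ] w) (hg : 0 ≤ᵐ[μ] g) (hw_int : Integrable w μ)
    (hg_meas : AEStronglyMeasurable g μ) (hwg_int : Integrable (fun x ↦ w x * g x ^ q) μ) :
    ∫ x, w x * g x ∂μ ≤ (∫ x, w x ∂μ) ^ (1 / p) * (∫ x, w x * g x ^ q ∂μ) ^ (1 / q) := by
  have hp := hpq.pos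
  have hq := hpq.symm.pos
  have hpq' : 1 / p + 1 / q = 1 := by simpa only [one_div] using hpq.inv_add_inv_eq_one
  set F : α → ℝ := fun x ↦ w x ^ (1 / p)
  set G : α → ℝ := fun x ↦ w x ^ (1 / q) * g x
  have hF0 : 0 ≤ᵐ[μ] F := hw.mono fun x hx ↦ Real.rpow_nonneg hx _
  have hG0 : 0 ≤ᵐ[μ] G := (hw.and hg).mono fun x hx ↦ mul_nonneg (Real.rpow_nonneg hx.1 _) hx.2
  have hFG : ∀ᵐ x ∂μ, F x * G x = w x * g x := by
    filter_upwards [hw] with x (hx : 0 ≤ w x)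
    rw [← mul_assoc, ← Real.rpow_add' hx (by rw [hpq']; norm_num), hpq', Real.rpow_one]
  have hFp : ∀ᵐ x ∂μ, F x ^ p = w x := by
    filter_upwards [hw] with x (hx : 0 ≤ w x)
    rw [← Real.rpow_mul hx, one_div_mul_cancel hp.ne', Real.rpow_one]
  have hGq : ∀ᵐ x ∂μ, G x ^ q = w x * g x ^ q := by
    filter_upwards [hw, hg] with x (hx : 0 ≤ w x) (hgx : 0 ≤ g x)
    rw [Real.mul_rpow (Real.rpow_nonneg hx _) hgx, ← Real.rpow_mul hx, one_div_mul_cancel hq.ne',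
      Real.rpow_one]
  have hF : MemLp F (ENNReal.ofReal p) μ := by
    have hF_meas : AEStronglyMeasurable F μ :=
      (Real.continuous_rpow_const (by positivity)).comp_aestronglyMeasurable hw_int.1
    rw [← integrable_norm_rpow_iff hF_meas (by simpa using hp) ENNReal.ofReal_ne_top,
      ENNReal.toReal_ofReal hp.le]
    refine hw_int.congr ?_
    filter_upwards [hF0, hFp] with x (hx : 0 ≤ F x) hxp
    rw [Real.norm_of_nonneg hx, hxp]
  have hG : MemLp G (ENNReal.ofReal q) μ := by
    have hG_meas : AEStronglyMeasurable G μ :=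
      ((Real.continuous_rpow_const (by positivity)).comp_aestronglyMeasurable hw_int.1).mul
        hg_meas
    rw [← integrable_norm_rpow_iff hG_meas (by simpa using hq) ENNReal.ofReal_ne_top,
      ENNReal.toReal_ofReal hq.le]
    refine hwg_int.congr ?_
    filter_upwards [hG0, hGq] with x (hx : 0 ≤ G x) hxq
    rw [Real.norm_of_nonneg hx, hxq]
  calc ∫ x, w x * g x ∂μ = ∫ x, F x * G x ∂μ := integral_congr_ae (hFG.mono fun x hx ↦ hx.symm)
    _ ≤ (∫ x, F x ^ p ∂μ) ^ (1 / p) * (∫ x, G x ^ q ∂μ) ^ (1 / q) :=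
      integral_mul_le_Lp_mul_Lq_of_nonneg hpq hF0 hG0 hF hG
    _ = _ := by rw [integral_congr_ae hFp, integral_congr_ae hGq]

theorem integral_symm_abs_mul_affine {h : ℝ} (hh : 0 ≤ h) (c d : ℝ) :
    ∫ u in -h..h, |u| * (c + d * u) = c * h ^ 2 := by
  have hφ : Continuous fun u : ℝ ↦ |u| * (c + d * u) := by fun_prop
  have hψ : Continuous fun u : ℝ ↦ |u| * (c - d * u) := by fun_prop
  have hneg : ∫ u in -h..0, |u| * (c + d * u) = ∫ u in (0:ℝ)..h, |u| * (c - d * u) := by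
    simpa [sub_eq_add_neg] using (integral_comp_neg (a := 0) (b := h)
      (fun u : ℝ ↦ |u| * (c + d * u))).symm
  rw [← integral_add_adjacent_intervals (hφ.intervalIntegrable _ _) (hφ.intervalIntegrable _ _),
    hneg, ← intervalIntegral.integral_add (hψ.intervalIntegrable _ _) (hφ.intervalIntegrable _ _)]
  calc ∫ u in (0:ℝ)..h, |u| * (c - d * u) + |u| * (c + d * u)
      = ∫ u in (0:ℝ)..h, 2 * c * u := by
        refine integral_congr fun u hu ↦ ?_
        rw [Set.uIcc_of_le hh] at hu
        simp only [abs_of_nonneg hu.1]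
        ring
    _ = c * h ^ 2 := by
        rw [intervalIntegral.integral_const_mul, integral_id]
        ring

theorem integral_abs_sub_midpoint_mul_affine {α β : ℝ} (hαβ : α ≤ β) (c d : ℝ) :
    ∫ y in α..β, |y - (α + β) / 2| * (c + d * (y - (α + β) / 2)) = (β - α) ^ 2 / 4 * c := by
  rw [integral_comp_sub_right (fun u ↦ |u| * (c + d * u)),
    show α - (α + β) / 2 = -((β - α) / 2) by ring, show β - (α + β) / 2 = (β - α) / 2 by ring,
    integral_symm_abs_mul_affine (by linarith)]
  ring

theorem integral_sub_trapezoid_eq_neg_integral_mul_deriv {f f' : ℝ → ℝ} {α β : ℝ}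
    (hf : ∀ y ∈ uIcc α β, HasDerivAt f (f' y) y) (hf' : IntervalIntegrable f' volume α β) :
    (∫ y in α..β, f y) - (f α + f β) / 2 * (β - α) =
      -∫ y in α..β, (y - (α + β) / 2) * f' y := by
  have hid : ∀ y ∈ uIcc α β, HasDerivAt (fun z ↦ z - (α + β) / 2) 1 y :=
    fun y _ ↦ (hasDerivAt_id y).sub_const _
  rw [integral_mul_deriv_eq_deriv_mul hid hf intervalIntegrable_const hf']
  simp only [one_mul]
  ring

theorem mul_rpow_one_div_mul_mul_rpow_one_div {p q X u v : ℝ} (hpq : p.HolderConjugate q)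
    (hX : 0 ≤ X) (hu : 0 ≤ u) (hv : 0 ≤ v) :
    (X * u) ^ (1 / p) * (X * v) ^ (1 / q) = X * (u ^ (1 / p) * v ^ (1 / q)) := by
  have hpq' : 1 / p + 1 / q = 1 := by simpa only [one_div] using hpq.inv_add_inv_eq_one
  have hX' : X ^ (1 / p) * X ^ (1 / q) = X := by
    rw [← Real.rpow_add' hX (by rw [hpq']; norm_num), hpq', Real.rpow_one]
  calc (X * u) ^ (1 / p) * (X * v) ^ (1 / q)
      = (X ^ (1 / p) * X ^ (1 / q)) * (u ^ (1 / p) * v ^ (1 / q)) := by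
        rw [Real.mul_rpow hX hu, Real.mul_rpow hX hv]
        ring
    _ = X * (u ^ (1 / p) * v ^ (1 / q)) := by rw [hX']

theorem two_sub_div_four_le {s : ℝ} (hs : 0 ≤ s) :
    (2 - s) / 4 ≤ (s ^ 2 + 3 * s + 4) / ((s + 1) * (s + 2) * (s + 3)) := by
  rw [div_le_div_iff₀ (by norm_num) (by positivity)]
  nlinarith [pow_nonneg hs 3, pow_nonneg hs 4, sq_nonneg (s - 1)]

theorem abs_integral_sub_midpoint_mul_le {f' : ℝ → ℝ} {s p q α β : ℝ} (hs0 : 0 ≤ s)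
    (hs1 : s ≤ 1) (hpq : p.HolderConjugate q) (hαβ : α < β)
    (hf' : IntervalIntegrable f' volume α β)
    (hconv : ∀ t ∈ Icc (0:ℝ) 1,
      |f' (t * α + (1 - t) * β)| ^ q ≤ t ^ s * |f' α| ^ q + (1 - t) ^ s * |f' β| ^ q) :
    |∫ y in α..β, (y - (α + β) / 2) * f' y| ≤
      ((β - α) ^ 2 / 2 * (1 / 2)) ^ (1 / p) *
        ((β - α) ^ 2 / 2 * ((2 - s) / 4 * (|f' α| ^ q + |f' β| ^ q))) ^ (1 / q) := by
  have hq := hpq.symm.pos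
  set m := (α + β) / 2
  set A := |f' α| ^ q
  set B := |f' β| ^ q
  set L : ℝ → ℝ := fun y ↦ (1 - s / 2) * (A + B) + s * (B - A) / (β - α) * (y - m)
  set μ := volume.restrict (Ioc α β)
  have hIoc : ∀ᵐ y ∂μ, y ∈ Icc α β := (ae_restrict_mem measurableSet_Ioc).mono
    fun y hy ↦ Ioc_subset_Icc_self hy
  have hL : ∀ᵐ y ∂μ, |y - m| * |f' y| ^ q ≤ |y - m| * L y := by
    filter_upwards [hIoc] with y hy
    refine mul_le_mul_of_nonneg_left ?_ (abs_nonneg _)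
    exact le_affine_of_sConvex_endpoints (g := fun y ↦ |f' y| ^ q) hs0 hs1 hαβ (by positivity)
      (by positivity) hconv hy
  have habs_meas : AEStronglyMeasurable (fun y ↦ |f' y|) μ := hf'.1.1.norm
  have hwL_int : Integrable (fun y ↦ |y - m| * L y) μ :=
    Continuous.integrableOn_Ioc (by fun_prop)
  have hwg_int : Integrable (fun y ↦ |y - m| * |f' y| ^ q) μ := by
    refine hwL_int.mono' ((by fun_prop : Continuous fun y ↦ |y - m|).aestronglyMeasurable.mul
      ((Real.continuous_rpow_const hq.le).comp_aestronglyMeasurable habs_meas)) ?_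
    filter_upwards [hL] with y hy
    rwa [Real.norm_of_nonneg (by positivity)]
  have hw : ∫ y, |y - m| ∂μ = (β - α) ^ 2 / 2 * (1 / 2) := by
    have := integral_abs_sub_midpoint_mul_affine hαβ.le 1 0
    simp only [zero_mul, add_zero, mul_one] at this
    rw [← integral_of_le hαβ.le, this]
    ring
  have hwg : ∫ y, |y - m| * |f' y| ^ q ∂μ ≤ (β - α) ^ 2 / 2 * ((2 - s) / 4 * (A + B)) :=
    calc ∫ y, |y - m| * |f' y| ^ q ∂μ ≤ ∫ y, |y - m| * L y ∂μ :=
          integral_mono_ae hwg_int hwL_int hL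
      _ = _ := by
          rw [← integral_of_le hαβ.le, integral_abs_sub_midpoint_mul_affine hαβ.le]
          ring
  calc |∫ y in α..β, (y - m) * f' y|
      ≤ ∫ y in α..β, |(y - m) * f' y| := abs_integral_le_integral_abs hαβ.le
    _ = ∫ y, |y - m| * |f' y| ∂μ := by simp only [integral_of_le hαβ.le, abs_mul, μ]
    _ ≤ (∫ y, |y - m| ∂μ) ^ (1 / p) * (∫ y, |y - m| * |f' y| ^ q ∂μ) ^ (1 / q) :=
        integral_mul_le_weighted_Lp_mul_Lq_of_nonneg hpq
          (.of_forall fun _ ↦ abs_nonneg _) (.of_forall fun _ ↦ abs_nonneg _)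
          (Continuous.integrableOn_Ioc (by fun_prop)) habs_meas hwg_int
    _ ≤ _ := by
        rw [hw]
        gcongr

theorem abs_integral_sub_trapezoid_le {f f' : ℝ → ℝ} {s p q α β : ℝ} (hs0 : 0 ≤ s) (hs1 : s ≤ 1)
    (hpq : p.HolderConjugate q) (hαβ : α < β)
    (hf : ∀ y ∈ Icc α β, HasDerivAt f (f' y) y) (hf' : IntervalIntegrable f' volume α β)
    (hconv : ∀ t ∈ Icc (0:ℝ) 1,
      |f' (t * α + (1 - t) * β)| ^ q ≤ t ^ s * |f' α| ^ q + (1 - t) ^ s * |f' β| ^ q) :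
    |(∫ y in α..β, f y) - (f α + f β) / 2 * (β - α)| ≤
      (2 / 3) ^ (1 / p) * ((s ^ 2 + 3 * s + 4) / ((s + 1) * (s + 2) * (s + 3))) ^ (1 / q) *
        ((β - α) ^ 2 / 2) * (|f' α| + |f' β|) := by
  have hf_uIcc : ∀ y ∈ uIcc α β, HasDerivAt f (f' y) y := uIcc_of_le hαβ.le ▸ hf
  have hp := hpq.pos
  have hq := hpq.symm.pos
  have h2s : 0 ≤ 2 - s := by linarith
  have h23 : (1 / 2 : ℝ) ≤ 2 / 3 := by norm_num
  have hM := two_sub_div_four_le hs0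
  have hAB : (|f' α| ^ q + |f' β| ^ q) ^ (1 / q) ≤ |f' α| + |f' β| :=
    Real.rpow_add_rpow_le_add (abs_nonneg _) (abs_nonneg _) hpq.symm.lt.le
  rw [integral_sub_trapezoid_eq_neg_integral_mul_deriv hf_uIcc hf', abs_neg]
  refine (abs_integral_sub_midpoint_mul_le hs0 hs1 hpq hαβ hf' hconv).trans ?_
  rw [mul_rpow_one_div_mul_mul_rpow_one_div hpq (by positivity) (by norm_num) (by positivity),
    Real.mul_rpow (by positivity) (by positivity)]
  calc (β - α) ^ 2 / 2 * ((1 / 2) ^ (1 / p) *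
        (((2 - s) / 4) ^ (1 / q) * (|f' α| ^ q + |f' β| ^ q) ^ (1 / q)))
      ≤ (β - α) ^ 2 / 2 * ((2 / 3) ^ (1 / p) *
        (((s ^ 2 + 3 * s + 4) / ((s + 1) * (s + 2) * (s + 3))) ^ (1 / q) *
          (|f' α| + |f' β|))) := by gcongr
    _ = _ := by ring

theorem mem_Icc_of_monotone_partition {x : ℕ → ℝ} {n : ℕ} {a b : ℝ} (hx0 : x 0 = a)
    (hxn : x n = b) (hmono : ∀ k < n, x k ≤ x (k + 1)) {k : ℕ} (hk : k ≤ n) :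
    x k ∈ Icc a b := by
  have hle : ∀ i j, i ≤ j → j ≤ n → x i ≤ x j := by
    intro i j hij
    induction j, hij using Nat.le_induction with
    | base => exact fun _ ↦ le_rfl
    | succ j _ ih => exact fun hj ↦ (ih (by omega)).trans (hmono j (by omega))
  exact ⟨hx0 ▸ hle 0 k k.zero_le hk, hxn ▸ hle k n hk le_rfl⟩

theorem trapezoid_error_s_convex_power_mean_general (f f' : ℝ → ℝ) (a b s p q c d : ℝ) (n : ℕ)
    (x : ℕ → ℝ)
    (hs : s ∈ Set.Ioc (0:ℝ) 1)
    (hq : 1 < q) (hp : p = q / (q - 1))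
    (hc : c < a) (hd : b < d)
    (hdiff : ∀ y ∈ Set.Ioo c d, HasDerivAt f (f' y) y)
    (hint : IntervalIntegrable f' volume a b)
    (hconv : ∀ y ∈ Set.Icc a b, ∀ z ∈ Set.Icc a b, ∀ t ∈ Set.Icc (0:ℝ) 1,
      |f' (t * y + (1 - t) * z)| ^ q ≤ t ^ s * |f' y| ^ q + (1 - t) ^ s * |f' z| ^ q)
    (hx0 : x 0 = a) (hxn : x n = b)
    (hxmono : ∀ k < n, x k < x (k + 1)) :
    |(∫ y in a..b, f y) -
        ∑ k ∈ Finset.range n, ((f (x k) + f (x (k + 1))) / 2) * (x (k + 1) - x k)| ≤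
      (2 / 3) ^ (1 / p) *
        ((s ^ 2 + 3 * s + 4) / ((s + 1) * (s + 2) * (s + 3))) ^ (1 / q) *
        ∑ k ∈ Finset.range n,
          ((x (k + 1) - x k) ^ 2 / 2) * (|f' (x k)| + |f' (x (k + 1))|) := by
  have hpq : p.HolderConjugate q :=
    ((Real.holderConjugate_iff_eq_conjExponent hq).mpr hp).symm
  have hx : ∀ k ≤ n, x k ∈ Icc a b :=
    fun k ↦ mem_Icc_of_monotone_partition hx0 hxn fun k hk ↦ (hxmono k hk).le
  have hsub : ∀ k < n, Icc (x k) (x (k + 1)) ⊆ Icc a b := fun k hk ↦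
    Icc_subset_Icc (hx k hk.le).1 (hx (k + 1) hk).2
  have hderiv : ∀ y ∈ Icc a b, HasDerivAt f (f' y) y := fun y hy ↦
    hdiff y ⟨hc.trans_le hy.1, hy.2.trans_lt hd⟩
  have hf_int : ∀ k < n, IntervalIntegrable f volume (x k) (x (k + 1)) := fun k hk ↦
    ContinuousOn.intervalIntegrable fun y hy ↦ (hderiv y (hsub k hk
      (uIcc_of_le (hxmono k hk).le ▸ hy))).continuousAt.continuousWithinAt
  rw [← hx0, ← hxn, ← sum_integral_adjacent_intervals hf_int, ← Finset.sum_sub_distrib,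
    Finset.mul_sum]
  refine (Finset.abs_sum_le_sum_abs _ _).trans (Finset.sum_le_sum fun k hk ↦ ?_)
  have hk : k < n := Finset.mem_range.mp hk
  refine (abs_integral_sub_trapezoid_le hs.1.le hs.2 hpq (hxmono k hk)
    (fun y hy ↦ hderiv y (hsub k hk hy))
    (hint.mono_set (uIcc_subset_uIcc (Icc_subset_uIcc (hx k hk.le))
      (Icc_subset_uIcc (hx (k + 1) hk))))
    (hconv _ (hx k hk.le) _ (hx (k + 1) hk))).trans_eq ?_
  ring

/-- Proposition 5: trapezoidal error estimate when `|f'|^q` is `s`-convex in the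
second sense, `q > 1`, `p = q/(q-1)`. -/
theorem trapezoid_error_s_convex_power_mean (f f' : ℝ → ℝ) (a b s p q c d : ℝ) (n : ℕ)
    (x : ℕ → ℝ)
    (ha : 0 ≤ a) (hab : a < b) (hs : s ∈ Set.Ioc (0:ℝ) 1)
    (hq : 1 < q) (hp : p = q / (q - 1))
    (hc : c < a) (hd : b < d)
    (hdiff : ∀ y ∈ Set.Ioo c d, HasDerivAt f (f' y) y)
    (hint : IntervalIntegrable f' volume a b)
    (hconv : ∀ y ∈ Set.Icc a b, ∀ z ∈ Set.Icc a b, ∀ t ∈ Set.Icc (0:ℝ) 1,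
      |f' (t * y + (1 - t) * z)| ^ q ≤ t ^ s * |f' y| ^ q + (1 - t) ^ s * |f' z| ^ q)
    (hx0 : x 0 = a) (hxn : x n = b)
    (hxmono : ∀ k < n, x k < x (k + 1)) :
    |(∫ y in a..b, f y) -
        ∑ k ∈ Finset.range n, ((f (x k) + f (x (k + 1))) / 2) * (x (k + 1) - x k)| ≤
      (2 / 3) ^ (1 / p) *
        ((s ^ 2 + 3 * s + 4) / ((s + 1) * (s + 2) * (s + 3))) ^ (1 / q) *
        ∑ k ∈ Finset.range n,
          ((x (k + 1) - x k) ^ 2 / 2) * (|f' (x k)| + |f' (x (k + 1))|) :=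
  trapezoid_error_s_convex_power_mean_general f f' a b s p q c d n x hs hq hp hc hd hdiff hint hconv
    hx0 hxn hxmono
end
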